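/- Let U1 : H1 → Z, U2 : H2 → Z be bounded operators and ψ ∈ H1 a vector satisfying U1* U2 U2* U1 ψ = ψ (e.g., if U1 is an isometry and U2* is an isometry). Then Eq(U1,U2) ∩ (span{ψ} ⊗ H2) = (span{ψ}) ⊗ span{U2* U1 ψ}, where Eq(U1,U2) ⊆ H1 ⊗ H2 is the fixed-point subspace of swap∘((U2* U1) ⊗ (U1* U2)). -/

import Mathlib

open scoped Kronecker

noncomputable section

def tensVec {ι κ : Type*} [Fintype ι] [Fintype κ]
    (x : EuclideanSpace ℂ ι) (y : EuclideanSpace ℂ κ) : EuclideanSpace ℂ (ι × κ) :=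
  WithLp.toLp 2 (fun p => x p.1 * y p.2)

def reindexCLM {ι κ : Type*} [Fintype ι] [Fintype κ] (e : ι ≃ κ) :
    EuclideanSpace ℂ ι →L[ℂ] EuclideanSpace ℂ κ :=
  LinearMap.toContinuousLinearMap
    { toFun := fun f => (WithLp.toLp 2 (fun j => f (e.symm j)) : EuclideanSpace ℂ κ)
      map_add' := fun _ _ => rfl
      map_smul' := fun _ _ => rfl }

def opTensCLM {ι κ μ ν : Type*} [Fintype ι] [Fintype κ] [Fintype μ] [Fintype ν]
    [DecidableEq κ] [DecidableEq ν]
    (A : EuclideanSpace ℂ κ →L[ℂ] EuclideanSpace ℂ ι)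
    (B : EuclideanSpace ℂ ν →L[ℂ] EuclideanSpace ℂ μ) :
    EuclideanSpace ℂ (κ × ν) →L[ℂ] EuclideanSpace ℂ (ι × μ) :=
  LinearMap.toContinuousLinearMap <| Matrix.toEuclideanLin <|
    (Matrix.toEuclideanLin.symm (A : EuclideanSpace ℂ κ →ₗ[ℂ] EuclideanSpace ℂ ι)) ⊗ₖ
      (Matrix.toEuclideanLin.symm (B : EuclideanSpace ℂ ν →ₗ[ℂ] EuclideanSpace ℂ μ))

def eqOpCLM {q₁ q₂ z : Type*} [Fintype q₁] [Fintype q₂] [Fintype z]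
    [DecidableEq q₁] [DecidableEq q₂]
    (V1 : EuclideanSpace ℂ q₁ →L[ℂ] EuclideanSpace ℂ z)
    (V2 : EuclideanSpace ℂ q₂ →L[ℂ] EuclideanSpace ℂ z) :
    EuclideanSpace ℂ (q₁ × q₂) →L[ℂ] EuclideanSpace ℂ (q₁ × q₂) :=
  (reindexCLM (Equiv.prodComm q₂ q₁)).comp
    (opTensCLM ((ContinuousLinearMap.adjoint V2).comp V1)
      ((ContinuousLinearMap.adjoint V1).comp V2))

def eqSub {q₁ q₂ z : Type*} [Fintype q₁] [Fintype q₂] [Fintype z]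
    [DecidableEq q₁] [DecidableEq q₂]
    (V1 : EuclideanSpace ℂ q₁ →L[ℂ] EuclideanSpace ℂ z)
    (V2 : EuclideanSpace ℂ q₂ →L[ℂ] EuclideanSpace ℂ z) :
    Submodule ℂ (EuclideanSpace ℂ (q₁ × q₂)) :=
  LinearMap.ker
    ((eqOpCLM V1 V2 : EuclideanSpace ℂ (q₁ × q₂) →ₗ[ℂ] EuclideanSpace ℂ (q₁ × q₂)) - LinearMap.id)

def eqFull {q₁ y₁ q₂ y₂ z : Type*}
    [Fintype q₁] [Fintype y₁] [Fintype q₂] [Fintype y₂] [Fintype z]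
    [DecidableEq q₁] [DecidableEq q₂] [DecidableEq y₁] [DecidableEq y₂]
    (U1 : EuclideanSpace ℂ q₁ →L[ℂ] EuclideanSpace ℂ z)
    (U2 : EuclideanSpace ℂ q₂ →L[ℂ] EuclideanSpace ℂ z) :
    EuclideanSpace ℂ ((q₁ × y₁) × (q₂ × y₂)) →L[ℂ] EuclideanSpace ℂ ((q₁ × y₁) × (q₂ × y₂)) :=
  (reindexCLM (Equiv.prodProdProdComm q₁ q₂ y₁ y₂)).comp
    ((opTensCLM (eqOpCLM U1 U2) (ContinuousLinearMap.id ℂ (EuclideanSpace ℂ (y₁ × y₂)))).comp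
      (reindexCLM (Equiv.prodProdProdComm q₁ y₁ q₂ y₂)))

def tensRLin {ι κ : Type*} [Fintype ι] [Fintype κ] (ψ : EuclideanSpace ℂ κ) :
    EuclideanSpace ℂ ι →ₗ[ℂ] EuclideanSpace ℂ (ι × κ) where
  toFun φ := tensVec φ ψ
  map_add' x y := by ext p; simp [tensVec, PiLp.add_apply, add_mul]
  map_smul' c x := by ext p; simp [tensVec, PiLp.smul_apply, smul_eq_mul, mul_assoc]

def tensSpan {ι κ : Type*} [Fintype ι] [Fintype κ]
    (S : Submodule ℂ (EuclideanSpace ℂ ι)) (T : Submodule ℂ (EuclideanSpace ℂ κ)) :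
    Submodule ℂ (EuclideanSpace ℂ (ι × κ)) :=
  Submodule.span ℂ {z | ∃ x ∈ S, ∃ y ∈ T, z = tensVec x y}

def spanDiv {ι κ : Type*} [Fintype ι] [Fintype κ]
    (B : Submodule ℂ (EuclideanSpace ℂ (ι × κ))) (ψ : EuclideanSpace ℂ κ) :
    Submodule ℂ (EuclideanSpace ℂ ι) :=
  Submodule.comap (tensRLin ψ) B

def rankOneCLM {H : Type*} [NormedAddCommGroup H] [InnerProductSpace ℂ H] (ψ : H) :
    H →L[ℂ] H :=
  (innerSL ℂ ψ).smulRight ψ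

def ptraceRight {ι κ : Type*} [Fintype ι] [Fintype κ] [DecidableEq ι] [DecidableEq κ]
    (ρ : EuclideanSpace ℂ (ι × κ) →L[ℂ] EuclideanSpace ℂ (ι × κ)) :
    EuclideanSpace ℂ ι →L[ℂ] EuclideanSpace ℂ ι :=
  LinearMap.toContinuousLinearMap <| Matrix.toEuclideanLin <|
    Matrix.of fun i j => ∑ k : κ,
      Matrix.toEuclideanLin.symm
        (ρ : EuclideanSpace ℂ (ι × κ) →ₗ[ℂ] EuclideanSpace ℂ (ι × κ)) (i, k) (j, k)

def ptraceLeft {ι κ : Type*} [Fintype ι] [Fintype κ] [DecidableEq ι] [DecidableEq κ]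
    (ρ : EuclideanSpace ℂ (ι × κ) →L[ℂ] EuclideanSpace ℂ (ι × κ)) :
    EuclideanSpace ℂ κ →L[ℂ] EuclideanSpace ℂ κ :=
  LinearMap.toContinuousLinearMap <| Matrix.toEuclideanLin <|
    Matrix.of fun i j => ∑ k : ι,
      Matrix.toEuclideanLin.symm
        (ρ : EuclideanSpace ℂ (ι × κ) →ₗ[ℂ] EuclideanSpace ℂ (ι × κ)) (k, i) (k, j)

end

lemma toEuclideanLin_apply' {ι κ : Type*} [Fintype ι] [Fintype κ] [DecidableEq κ]
    (M : Matrix ι κ ℂ) (x : EuclideanSpace ℂ κ) (i : ι) :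
    Matrix.toEuclideanLin M x i = ∑ j, M i j * x j := rfl

lemma opTensCLM_tensVec {ι κ μ ν : Type*} [Fintype ι] [Fintype κ] [Fintype μ] [Fintype ν]
    [DecidableEq κ] [DecidableEq ν]
    (A : EuclideanSpace ℂ κ →L[ℂ] EuclideanSpace ℂ ι)
    (B : EuclideanSpace ℂ ν →L[ℂ] EuclideanSpace ℂ μ)
    (x : EuclideanSpace ℂ κ) (y : EuclideanSpace ℂ ν) :
    opTensCLM A B (tensVec x y) = tensVec (A x) (B y) := by
  set M := Matrix.toEuclideanLin.symm (A : EuclideanSpace ℂ κ →ₗ[ℂ] EuclideanSpace ℂ ι) with hM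
  set N := Matrix.toEuclideanLin.symm (B : EuclideanSpace ℂ ν →ₗ[ℂ] EuclideanSpace ℂ μ) with hN
  have hA : ∀ i, A x i = ∑ k, M i k * x k := by
    intro i
    have : Matrix.toEuclideanLin M x = A x := by rw [hM, LinearEquiv.apply_symm_apply]; rfl
    rw [← this, toEuclideanLin_apply']
  have hB : ∀ m, B y m = ∑ n, N m n * y n := by
    intro m
    have : Matrix.toEuclideanLin N y = B y := by rw [hN, LinearEquiv.apply_symm_apply]; rfl
    rw [← this, toEuclideanLin_apply']
  ext p
  obtain ⟨i, m⟩ := p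
  show Matrix.toEuclideanLin (M ⊗ₖ N) (tensVec x y) (i, m) = _
  rw [toEuclideanLin_apply']
  simp only [tensVec, Matrix.kroneckerMap_apply, hA, hB, Fintype.sum_prod_type,
    Finset.sum_mul, Finset.mul_sum]
  rw [Finset.sum_comm]
  exact Finset.sum_congr rfl fun n _ => Finset.sum_congr rfl fun k _ => by ring

lemma eqOpCLM_tensVec {q₁ q₂ z : Type*} [Fintype q₁] [Fintype q₂] [Fintype z]
    [DecidableEq q₁] [DecidableEq q₂]
    (V1 : EuclideanSpace ℂ q₁ →L[ℂ] EuclideanSpace ℂ z)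
    (V2 : EuclideanSpace ℂ q₂ →L[ℂ] EuclideanSpace ℂ z)
    (x : EuclideanSpace ℂ q₁) (y : EuclideanSpace ℂ q₂) :
    eqOpCLM V1 V2 (tensVec x y) =
      tensVec ((ContinuousLinearMap.adjoint V1) (V2 y))
        ((ContinuousLinearMap.adjoint V2) (V1 x)) := by
  show reindexCLM (Equiv.prodComm q₂ q₁)
      (opTensCLM ((ContinuousLinearMap.adjoint V2).comp V1)
        ((ContinuousLinearMap.adjoint V1).comp V2) (tensVec x y)) = _
  rw [opTensCLM_tensVec]
  ext p
  exact mul_comm _ _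

lemma tensVec_smul_right {ι κ : Type*} [Fintype ι] [Fintype κ]
    (x : EuclideanSpace ℂ ι) (c : ℂ) (y : EuclideanSpace ℂ κ) :
    tensVec x (c • y) = c • tensVec x y := by
  ext p; simp [tensVec]; ring

lemma tensVec_smul_left {ι κ : Type*} [Fintype ι] [Fintype κ]
    (c : ℂ) (x : EuclideanSpace ℂ ι) (y : EuclideanSpace ℂ κ) :
    tensVec (c • x) y = c • tensVec x y := by
  ext p; simp [tensVec]; ring

lemma tensSpan_singleton {ι κ : Type*} [Fintype ι] [Fintype κ]
    (x : EuclideanSpace ℂ ι) (y : EuclideanSpace ℂ κ) :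
    tensSpan (Submodule.span ℂ {x}) (Submodule.span ℂ {y}) =
      Submodule.span ℂ {tensVec x y} := by
  apply le_antisymm
  · rw [tensSpan, Submodule.span_le]
    rintro _ ⟨a, ha, b, hb, rfl⟩
    obtain ⟨c, rfl⟩ := Submodule.mem_span_singleton.mp ha
    obtain ⟨d, rfl⟩ := Submodule.mem_span_singleton.mp hb
    rw [tensVec_smul_left, tensVec_smul_right]
    exact Submodule.smul_mem _ c (Submodule.smul_mem _ d (Submodule.mem_span_singleton_self _))
  · rw [Submodule.span_le, Set.singleton_subset_iff]
    exact Submodule.subset_span ⟨x, Submodule.mem_span_singleton_self x, y,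
      Submodule.mem_span_singleton_self y, rfl⟩

lemma mem_tensSpan_span_top {ι κ : Type*} [Fintype ι] [Fintype κ]
    (ψ : EuclideanSpace ℂ ι) (v : EuclideanSpace ℂ (ι × κ)) :
    v ∈ tensSpan (Submodule.span ℂ {ψ}) ⊤ ↔ ∃ φ, v = tensVec ψ φ := by
  constructor
  · intro hv
    induction hv using Submodule.span_induction with
    | mem z hz =>
      obtain ⟨a, ha, b, _, rfl⟩ := hz
      obtain ⟨c, rfl⟩ := Submodule.mem_span_singleton.mp ha
      exact ⟨c • b, by rw [tensVec_smul_left, tensVec_smul_right]⟩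
    | zero => exact ⟨0, by ext p; simp [tensVec]⟩
    | add u w _ _ hu hw =>
      obtain ⟨φ, rfl⟩ := hu; obtain ⟨φ', rfl⟩ := hw
      exact ⟨φ + φ', by ext p; simp [tensVec]; ring⟩
    | smul c u _ hu =>
      obtain ⟨φ, rfl⟩ := hu
      exact ⟨c • φ, by rw [tensVec_smul_right]⟩
  · rintro ⟨φ, rfl⟩
    exact Submodule.subset_span ⟨ψ, Submodule.mem_span_singleton_self ψ, φ, trivial, rfl⟩

/-- if `U1* U2 U2* U1 ψ = ψ`, then
`Eq(U1,U2) ∩ (span{ψ} ⊗ H2) = span{ψ} ⊗ span{U2* U1 ψ}`. -/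
theorem stmt8 {q₁ q₂ z : Type*} [Fintype q₁] [Fintype q₂] [Fintype z]
    [DecidableEq q₁] [DecidableEq q₂]
    (U1 : EuclideanSpace ℂ q₁ →L[ℂ] EuclideanSpace ℂ z)
    (U2 : EuclideanSpace ℂ q₂ →L[ℂ] EuclideanSpace ℂ z)
    (ψ : EuclideanSpace ℂ q₁)
    (hψ : (ContinuousLinearMap.adjoint U1)
      (U2 ((ContinuousLinearMap.adjoint U2) (U1 ψ))) = ψ) :
    eqSub U1 U2 ⊓ tensSpan (Submodule.span ℂ {ψ}) ⊤ =
      tensSpan (Submodule.span ℂ {ψ})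
        (Submodule.span ℂ {((ContinuousLinearMap.adjoint U2).comp U1) ψ}) := by
  set χ : EuclideanSpace ℂ q₂ := (ContinuousLinearMap.adjoint U2) (U1 ψ) with hχ
  have hmem_eqSub : ∀ v : EuclideanSpace ℂ (q₁ × q₂),
      v ∈ eqSub U1 U2 ↔ eqOpCLM U1 U2 v = v := by
    intro v
    rw [eqSub, LinearMap.mem_ker, LinearMap.sub_apply, sub_eq_zero]
    rfl
  rw [tensSpan_singleton]
  apply le_antisymm
  · intro v hv
    rw [Submodule.mem_inf] at hv
    obtain ⟨hker, hspan⟩ := hv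
    obtain ⟨φ, rfl⟩ := (mem_tensSpan_span_top ψ v).mp hspan
    rw [hmem_eqSub, eqOpCLM_tensVec] at hker
    by_cases hψ0 : ψ = 0
    · have : tensVec ψ φ = 0 := by subst hψ0; ext p; simp [tensVec]
      rw [this]; exact Submodule.zero_mem _
    · obtain ⟨i, hi⟩ : ∃ i, ψ i ≠ 0 := by
        by_contra h; push_neg at h; exact hψ0 (PiLp.ext h)
      have key : ∀ j, (ContinuousLinearMap.adjoint U1) (U2 φ) i * χ j = ψ i * φ j := by
        intro j
        have := congrFun (congrArg WithLp.ofLp hker) (i, j)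
        simpa [tensVec] using this
      have hφ : φ = ((ContinuousLinearMap.adjoint U1) (U2 φ) i / ψ i) • χ := by
        ext j
        have := key j
        simp only [PiLp.smul_apply, smul_eq_mul]
        rw [div_mul_eq_mul_div, eq_div_iff hi, this, mul_comm]
      rw [hφ, tensVec_smul_right]
      exact Submodule.smul_mem _ _ (Submodule.mem_span_singleton_self _)
  · rw [Submodule.span_le, Set.singleton_subset_iff, SetLike.mem_coe, Submodule.mem_inf]
    constructor
    · rw [hmem_eqSub, eqOpCLM_tensVec]
      show tensVec ((ContinuousLinearMap.adjoint U1) (U2 ((ContinuousLinearMap.adjoint U2) (U1 ψ)))) _ = _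
      rw [hψ]
      rfl
    · exact (mem_tensSpan_span_top ψ _).mpr ⟨χ, rfl⟩
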